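/- Let H be a complex Hilbert space, M : H →L[ℂ] H a bounded operator, z ∈ ℂ, and k, k' ∈ H linearly independent vectors with M* k = (conj z) • k and M* k' = k + (conj z) • k'. Set a = ‖k‖², b = ‖k'‖², c = ⟪k, k'⟫, and d = a*b − |c|² (which is positive by the strict Cauchy–Schwarz inequality, since k, k' are linearly independent). Define e = (√a)⁻¹ • k and f = (√(a*d))⁻¹ • (a • k' − c • k). Let λ ∈ ℂ with |λ| ≤ 1 and set h1 = (0, e) and h2 = ((√(1 − |λ|²)) • e, λ • f) in H ⊕ H. Then: (i) h1 and h2 are orthonormal in H ⊕ H; (ii) (M* ⊕ M*) h1 = (conj z) • h1; and (iii) (M* ⊕ M*) h2 = (conj z) • h2 + ((λ * a) / √d) • h1. In particular, the span of {h1, h2} is invariant under M* ⊕ M* and the matrix of the restriction of M* ⊕ M* in the ordered orthonormal basis (h1, h2) is !![conj z, λ a / √d; 0, conj z]. -/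

import Mathlib

/-!
The vectors `e, f` are the Gram–Schmidt orthonormalization of the Jordan chain `k, k'` of `M*`;
strict Cauchy–Schwarz gives `d > 0`, and `‖a • k' - c • k‖² = a d`. Since `M* k' = k + z̄ k'`,
`M*` acts on `(e, f)` by the Jordan block `!![z̄, a / √d; 0, z̄]`. In `H ⊕ H` the vectors
`(0, e)` and `(√(1 - |λ|²) e, λ f)` are orthonormal, and only the `λ f` component of the second
one feels the off-diagonal entry, which therefore gets multiplied by `λ`.
-/
section InnerProductSpace

variable {𝕜 E : Type*} [RCLike 𝕜] [NormedAddCommGroup E] [InnerProductSpace 𝕜 E]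
  {F : Type*} [FunLike F E E] [LinearMapClass F 𝕜 E E] {T : F} {μ : 𝕜}

theorem norm_inner_sq_lt_of_linearIndependent {x y : E} (h : LinearIndependent 𝕜 ![x, y]) :
    ‖(inner 𝕜 x y : 𝕜)‖ ^ 2 < ‖x‖ ^ 2 * ‖y‖ ^ 2 := by
  obtain ⟨hy, hnot⟩ := linearIndependent_fin2.mp h
  simp only [Matrix.cons_val_one, Matrix.cons_val_zero] at hy hnot
  have hx : x ≠ 0 := fun hx => hnot 0 (by simp [hx])
  have hlt : ‖(inner 𝕜 y x : 𝕜)‖ < ‖y‖ * ‖x‖ := by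
    refine (norm_inner_le_norm y x).lt_of_ne fun heq => ?_
    obtain ⟨r, -, hr⟩ := (norm_inner_eq_norm_iff hy hx).mp heq
    exact hnot r hr.symm
  rw [norm_inner_symm, mul_comm] at hlt
  rw [← mul_pow]
  exact pow_lt_pow_left₀ hlt (norm_nonneg _) two_ne_zero

theorem norm_sq_norm_sq_smul_sub_inner_smul (x y : E) :
    ‖((‖x‖ ^ 2 : ℝ) : 𝕜) • y - (inner 𝕜 x y : 𝕜) • x‖ ^ 2
      = ‖x‖ ^ 2 * (‖x‖ ^ 2 * ‖y‖ ^ 2 - ‖(inner 𝕜 x y : 𝕜)‖ ^ 2) := by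
  apply RCLike.ofReal_injective (K := 𝕜)
  rw [RCLike.ofReal_pow, ← inner_self_eq_norm_sq_to_K]
  simp only [inner_sub_left, inner_sub_right, inner_smul_left, inner_smul_right,
    inner_self_eq_norm_sq_to_K x, inner_self_eq_norm_sq_to_K y, ← inner_conj_symm y x,
    RCLike.conj_ofReal]
  push_cast
  linear_combination (-(‖x‖ : 𝕜) ^ 2) * RCLike.conj_mul (inner 𝕜 x y)

theorem inner_norm_sq_smul_sub_inner_smul (x y : E) :
    (inner 𝕜 x (((‖x‖ ^ 2 : ℝ) : 𝕜) • y - (inner 𝕜 x y : 𝕜) • x) : 𝕜) = 0 := by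
  rw [inner_sub_right, inner_smul_right, inner_smul_right, inner_self_eq_norm_sq_to_K]
  push_cast
  ring

theorem norm_inv_sqrt_smul_eq_one {v : E} (hv : v ≠ 0) {r : ℝ} (hr : ‖v‖ ^ 2 = r) :
    ‖((Real.sqrt r : 𝕜))⁻¹ • v‖ = 1 := by
  rw [← hr, Real.sqrt_sq (norm_nonneg v), norm_smul_inv_norm hv]

theorem apply_smul_sub_smul_of_jordan_chain {x y : E} (hx : T x = μ • x) (hy : T y = x + μ • y) (α β : 𝕜) :
    T (α • y - β • x) = μ • (α • y - β • x) + α • x := by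
  rw [map_sub, map_smul, map_smul, hx, hy]
  module

theorem apply_inv_sqrt_smul_sub_smul_of_jordan_chain {x y : E} (hx : T x = μ • x)
    (hy : T y = x + μ • y) {a : ℝ} (ha : 0 ≤ a) (d : ℝ) (β : 𝕜) :
    T (((Real.sqrt (a * d) : 𝕜))⁻¹ • ((a : 𝕜) • y - β • x))
      = μ • ((Real.sqrt (a * d) : 𝕜))⁻¹ • ((a : 𝕜) • y - β • x)
        + ((a : 𝕜) / (Real.sqrt d : 𝕜)) • ((Real.sqrt a : 𝕜))⁻¹ • x := by
  rw [map_smul, apply_smul_sub_smul_of_jordan_chain hx hy, Real.sqrt_mul ha]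
  push_cast
  rw [smul_smul, smul_smul]
  module

section DirectSum

open WithLp

theorem norm_toLp_zero_prod {e : E} (he : ‖e‖ = 1) : ‖toLp 2 ((0 : E), e)‖ = 1 := by
  rw [prod_norm_eq_of_L2]
  simp [he]

theorem norm_toLp_sqrt_smul_prod {e f : E} (he : ‖e‖ = 1) (hf : ‖f‖ = 1) {lam : 𝕜}
    (hlam : ‖lam‖ ≤ 1) : ‖toLp 2 (((Real.sqrt (1 - ‖lam‖ ^ 2) : 𝕜)) • e, lam • f)‖ = 1 := by
  have h : 0 ≤ 1 - ‖lam‖ ^ 2 := by nlinarith [norm_nonneg lam]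
  rw [prod_norm_eq_of_L2]
  simp [norm_smul, he, hf, Real.sq_sqrt h]

theorem inner_toLp_zero_prod_toLp {e f : E} (hef : (inner 𝕜 e f : 𝕜) = 0) (s lam : 𝕜) :
    (inner 𝕜 (toLp 2 ((0 : E), e)) (toLp 2 (s • e, lam • f)) : 𝕜) = 0 := by
  simp [inner_smul_right, hef]

theorem toLp_apply_zero_prod {e : E} (he : T e = μ • e) :
    toLp 2 (T 0, T e) = μ • toLp 2 ((0 : E), e) := by
  simp [he, ← toLp_smul]

theorem toLp_apply_smul_prod {e f : E} {γ : 𝕜} (he : T e = μ • e) (hf : T f = μ • f + γ • e)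
    (s lam : 𝕜) :
    toLp 2 (T (s • e), T (lam • f))
      = μ • toLp 2 (s • e, lam • f) + (lam * γ) • toLp 2 ((0 : E), e) := by
  simp only [map_smul, he, hf, ← toLp_smul, ← toLp_add]
  congr 1
  ext <;> simp only [Prod.smul_fst, Prod.smul_snd, Prod.fst_add, Prod.snd_add] <;> module

end DirectSum

end InnerProductSpace

open ContinuousLinearMap

theorem stmt_6 {H : Type*} [NormedAddCommGroup H] [InnerProductSpace ℂ H]
    [CompleteSpace H]
    (M : H →L[ℂ] H) (z : ℂ) (k k' : H)
    (hind : LinearIndependent ℂ ![k, k'])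
    (hMk : ContinuousLinearMap.adjoint M k = (starRingEnd ℂ) z • k)
    (hMk' : ContinuousLinearMap.adjoint M k' = k + (starRingEnd ℂ) z • k')
    (a b d : ℝ) (c : ℂ)
    (ha : a = ‖k‖ ^ 2) (hb : b = ‖k'‖ ^ 2)
    (hc : c = (inner ℂ k k' : ℂ))
    (hd : d = a * b - ‖c‖ ^ 2)
    (e f : H)
    (he : e = ((Real.sqrt a : ℂ))⁻¹ • k)
    (hf : f = ((Real.sqrt (a * d) : ℂ))⁻¹ • ((a : ℂ) • k' - c • k))
    (lam : ℂ) (hlam : ‖lam‖ ≤ 1)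
    (h1 h2 : WithLp 2 (H × H))
    (hh1 : h1 = (WithLp.equiv 2 (H × H)).symm (0, e))
    (hh2 : h2 = (WithLp.equiv 2 (H × H)).symm
      (((Real.sqrt (1 - ‖lam‖ ^ 2) : ℂ)) • e, lam • f)) :
    (‖h1‖ = 1 ∧ ‖h2‖ = 1 ∧ (inner ℂ h1 h2 : ℂ) = 0) ∧
    (WithLp.equiv 2 (H × H)).symm
        (ContinuousLinearMap.adjoint M ((WithLp.equiv 2 (H × H)) h1).1,
         ContinuousLinearMap.adjoint M ((WithLp.equiv 2 (H × H)) h1).2)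
      = (starRingEnd ℂ) z • h1 ∧
    (WithLp.equiv 2 (H × H)).symm
        (ContinuousLinearMap.adjoint M ((WithLp.equiv 2 (H × H)) h2).1,
         ContinuousLinearMap.adjoint M ((WithLp.equiv 2 (H × H)) h2).2)
      = (starRingEnd ℂ) z • h2 + ((lam * (a : ℂ)) / (Real.sqrt d : ℂ)) • h1 := by
  have hk : k ≠ 0 := LinearIndependent.ne_zero 0 hind
  have hd_pos : 0 < d := by
    rw [hd, ha, hb, hc]
    linarith [norm_inner_sq_lt_of_linearIndependent hind]
  have hg : ‖(a : ℂ) • k' - c • k‖ ^ 2 = a * d := by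
    rw [hd, ha, hb, hc]
    -- `exact`, not `rw`: the `RCLike` coercion `ℝ → ℂ` is `Complex.ofReal` only up to unfolding
    exact norm_sq_norm_sq_smul_sub_inner_smul k k'
  have hkg : (inner ℂ k ((a : ℂ) • k' - c • k) : ℂ) = 0 := by
    rw [ha, hc]
    exact inner_norm_sq_smul_sub_inner_smul k k'
  have hg0 : (a : ℂ) • k' - c • k ≠ 0 := by
    intro h0
    rw [h0, norm_zero, zero_pow two_ne_zero] at hg
    exact (mul_pos (ha ▸ pow_pos (norm_pos_iff.2 hk) 2) hd_pos).ne hg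
  have he1 : ‖e‖ = 1 := he ▸ norm_inv_sqrt_smul_eq_one hk ha.symm
  have hf1 : ‖f‖ = 1 := hf ▸ norm_inv_sqrt_smul_eq_one hg0 hg
  have hef : (inner ℂ e f : ℂ) = 0 := by
    rw [he, hf, inner_smul_left, inner_smul_right, hkg, mul_zero, mul_zero]
  have hMe : adjoint M e = (starRingEnd ℂ) z • e := by
    rw [he, map_smul, hMk, smul_comm]
  have hMf : adjoint M f = (starRingEnd ℂ) z • f + ((a : ℂ) / (Real.sqrt d : ℂ)) • e := by
    rw [hf, he]
    exact apply_inv_sqrt_smul_sub_smul_of_jordan_chain hMk hMk' (ha ▸ sq_nonneg _) d c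
  subst hh1 hh2
  simp only [WithLp.equiv_symm_apply]
  refine ⟨⟨norm_toLp_zero_prod he1, norm_toLp_sqrt_smul_prod he1 hf1 hlam,
    inner_toLp_zero_prod_toLp hef _ _⟩, toLp_apply_zero_prod hMe, ?_⟩
  rw [mul_div_assoc]
  exact toLp_apply_smul_prod hMe hMf _ _
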